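/- For t > 0 and n ≥ 2, the variance σ_n² = h_n''(1;t)/h_n(1;t) + n/2 − n²/4 of the coefficient distribution of h_n(x;t) satisfies σ_n² = ((n-1)/(4(t+1)))·h_{n+1}(1;t)/h_n(1;t) − n/(4(t+1)), and σ_n²/n → 1/(4√(t+1)) as n → ∞; in particular σ_n² → ∞. -/

import Mathlib

/-!
Writing `i = k + 1` and `d = j + k + 1`, the coefficient of `t ^ i * x ^ d` in `h_{m+2}` is the
trinomial coefficient `(m - k; j, k, m - 2k - j)`, i.e. `h_{m+2} = t x [z^m] 1 / (1 - (1 + x) z - t x z²)`.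
So `h_{n+2} = (1 + x) h_{n+1} + t x h_n` for `n ≥ 2`, coefficientwise Pascal's rule for trinomial
coefficients. Differentiating this recurrence at `x = 1`, the sequences `h_n(1)`,
`h_n'(1) - n h_n(1) / 2` and `4 (t + 1) h_n''(1) - (n - 1) h_{n+1}(1) - n (nt + n - 2t - 3) h_n(1)` all
satisfy `u_{n+2} = 2 u_{n+1} + t u_n`; the last two vanish at `n = 2, 3`, hence for all `n ≥ 2`.
Finally `h_n(1) = A (1 + √(t+1))^n + B (1 - √(t+1))^n` with `A > 0`, so
`h_{n+1}(1) / h_n(1) → 1 + √(t+1)`, and the formula for `σ_n²` gives `σ_n² / n → √(t+1) / (4 (t + 1))`.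
-/

open Polynomial Finset

/-- Speyer's g-polynomial of the uniform matroid `U_{n,d}`, evaluated at `t`. -/
noncomputable def speyerG (n d : ℕ) (t : ℝ) : ℝ :=
  ∑ i ∈ Finset.Icc 1 d,
    ((n - i - 1).choose (d - i) : ℝ) * ((n - d - 1).choose (i - 1) : ℝ) * t ^ i

/-- The generating polynomial `h_n(x;t) = ∑_{d=1}^{n-1} g_{n,d}(t) x^d` (in `x`). -/
noncomputable def hPoly (n : ℕ) (t : ℝ) : Polynomial ℝ :=
  ∑ d ∈ Finset.Icc 1 (n - 1), Polynomial.C (speyerG n d t) * Polynomial.X ^ d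

open Filter Topology

/- Pascal's rule for the trinomial coefficient `(m; a, k, m - a - k) = C(m, a) * C(m - a, k)`. -/
theorem Nat.choose_mul_choose_succ (m a k : ℕ) :
    (m + 1).choose a * (m + 1 - a).choose k =
      m.choose a * (m - a).choose k
        + (if 0 < a then m.choose (a - 1) * (m + 1 - a).choose k else 0)
        + (if 0 < k then m.choose a * (m - a).choose (k - 1) else 0) := by
  rcases a with _ | a <;> rcases k with _ | k
  · simp
  · simp [Nat.choose_succ_succ, add_comm]
  · simp [Nat.choose_succ_succ, add_comm]
  · rcases lt_or_ge a m with h | h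
    · obtain ⟨l, rfl⟩ := Nat.exists_eq_add_of_lt h
      rw [show a + l + 1 + 1 - (a + 1) = l + 1 by omega, show a + l + 1 - (a + 1) = l by omega,
        Nat.choose_succ_succ (a + l + 1) a, Nat.choose_succ_succ l k]
      simp only [Nat.add_pos_right, zero_lt_one, if_true, Nat.add_sub_cancel]
      ring
    · simp [Nat.choose_eq_zero_of_lt (Nat.lt_succ_of_le h), Nat.choose_succ_succ]

-- The coefficient of `t ^ (k + 1)` in `speyerG_add_two`; for `k < n` it is the rule above with
-- `n = m + 1 + k` and `d = k + a`.
theorem Nat.choose_sub_mul_choose_sub_pascal {n d k : ℕ} (hn : 2 ≤ n) (hk : k ≤ d) :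
    (n - k).choose (d - k) * (n - d).choose k =
      (n - 1 - k).choose (d - k) * (n - 1 - d).choose k
        + (if k < d then (n - 1 - k).choose (d - 1 - k) * (n - d).choose k else 0)
        + (if 0 < k then (n - 1 - k).choose (d - k) * (n - 1 - d).choose (k - 1) else 0) := by
  obtain ⟨a, rfl⟩ := Nat.exists_eq_add_of_le hk
  rcases lt_or_ge k n with hkn | hkn
  · obtain ⟨m, rfl⟩ := Nat.exists_eq_add_of_lt hkn
    simp only [show k + m + 1 - k = m + 1 by omega, show k + m + 1 - 1 - k = m by omega,
      show k + m + 1 - (k + a) = m + 1 - a by omega, show k + m + 1 - 1 - (k + a) = m - a by omega,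
      show k + a - 1 - k = a - 1 by omega, Nat.add_sub_cancel_left, Nat.lt_add_right_iff_pos]
    exact Nat.choose_mul_choose_succ m a k
  · -- truncated subtraction turns every second factor into `C(0, k)` or `C(0, k - 1)` with `k ≥ 2`
    rw [Nat.sub_eq_zero_of_le (by omega : n ≤ k + a), Nat.sub_eq_zero_of_le (by omega : n - 1 ≤ k + a),
      Nat.choose_eq_zero_of_lt (by omega : 0 < k), Nat.choose_eq_zero_of_lt (by omega : 0 < k - 1)]
    simp

theorem speyerG_eq_sum_range (m d : ℕ) (t : ℝ) :
    speyerG m d t = ∑ k ∈ range d,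
      ((m - 2 - k).choose (d - 1 - k) : ℝ) * ((m - 1 - d).choose k : ℝ) * t ^ (k + 1) := by
  rw [speyerG, ← Finset.Ico_add_one_right_eq_Icc, Finset.sum_Ico_eq_sum_range]
  refine Finset.sum_congr (by simp) fun k _ => ?_
  rw [show m - (1 + k) - 1 = m - 2 - k by omega, show d - (1 + k) = d - 1 - k by omega,
    show m - d - 1 = m - 1 - d by omega, Nat.add_sub_cancel_left, add_comm 1 k]

theorem speyerG_zero_right (m : ℕ) (t : ℝ) : speyerG m 0 t = 0 := by
  simp [speyerG]

theorem speyerG_eq_zero_of_le {m d : ℕ} (hm : 2 ≤ m) (h : m ≤ d) (t : ℝ) : speyerG m d t = 0 := by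
  rw [speyerG_eq_sum_range]
  refine sum_eq_zero fun k _ => ?_
  rcases k with _ | k
  · simp [Nat.choose_eq_zero_of_lt (by omega : m - 2 < d - 1)]
  · simp [Nat.sub_eq_zero_of_le (by omega : m - 1 ≤ d)]

theorem speyerG_add_two {n : ℕ} (hn : 2 ≤ n) (d : ℕ) (t : ℝ) :
    speyerG (n + 2) (d + 1) t =
      speyerG (n + 1) (d + 1) t + speyerG (n + 1) d t + t * speyerG n d t := by
  simp only [speyerG_eq_sum_range]
  have hmid : ∑ k ∈ range d,
      ((n + 1 - 2 - k).choose (d - 1 - k) : ℝ) * ((n + 1 - 1 - d).choose k : ℝ) * t ^ (k + 1) =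
      ∑ k ∈ range (d + 1), ((if k < d then (n - 1 - k).choose (d - 1 - k) * (n - d).choose k
        else 0 : ℕ) : ℝ) * t ^ (k + 1) := by
    rw [sum_range_succ]
    simp only [lt_irrefl, if_false, Nat.cast_zero, zero_mul, add_zero]
    refine sum_congr rfl fun k hk => ?_
    rw [if_pos (mem_range.1 hk), show n + 1 - 2 - k = n - 1 - k by omega,
      show n + 1 - 1 - d = n - d by omega]
    push_cast; ring
  have hlow : t * ∑ k ∈ range d,
      ((n - 2 - k).choose (d - 1 - k) : ℝ) * ((n - 1 - d).choose k : ℝ) * t ^ (k + 1) =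
      ∑ k ∈ range (d + 1), ((if 0 < k then (n - 1 - k).choose (d - k) * (n - 1 - d).choose (k - 1)
        else 0 : ℕ) : ℝ) * t ^ (k + 1) := by
    rw [sum_range_succ', mul_sum]
    simp only [lt_irrefl, if_false, Nat.cast_zero, zero_mul, add_zero, Nat.succ_pos, if_true,
      Nat.add_sub_cancel]
    refine sum_congr rfl fun k _ => ?_
    rw [show n - 1 - (k + 1) = n - 2 - k by omega, show d - (k + 1) = d - 1 - k by omega]
    push_cast; ring
  rw [hmid, hlow, ← sum_add_distrib, ← sum_add_distrib]
  refine sum_congr rfl fun k hk => ?_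
  rw [← add_mul, ← add_mul, show n + 2 - 2 - k = n - k by omega,
    show n + 2 - 1 - (d + 1) = n - d by omega, show n + 1 - 2 - k = n - 1 - k by omega,
    show n + 1 - 1 - (d + 1) = n - 1 - d by omega, Nat.add_sub_cancel]
  congr 1
  exact_mod_cast Nat.choose_sub_mul_choose_sub_pascal hn (Nat.lt_succ_iff.1 (mem_range.1 hk))

theorem coeff_hPoly {m : ℕ} (hm : 2 ≤ m) (t : ℝ) (d : ℕ) : (hPoly m t).coeff d = speyerG m d t := by
  simp only [hPoly, finsetSum_coeff, coeff_C_mul_X_pow, sum_ite_eq, mem_Icc]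
  split_ifs with hd
  · rfl
  · rcases Nat.eq_zero_or_pos d with rfl | hd0
    · exact (speyerG_zero_right m t).symm
    · exact (speyerG_eq_zero_of_le hm (by omega) t).symm

theorem hPoly_add_two {n : ℕ} (hn : 2 ≤ n) (t : ℝ) :
    hPoly (n + 2) t = (1 + X) * hPoly (n + 1) t + C t * X * hPoly n t := by
  have h1 : 2 ≤ n + 1 := by omega
  have h2 : 2 ≤ n + 2 := by omega
  ext (_ | d)
  · simp [coeff_hPoly h1, coeff_hPoly h2, speyerG_zero_right]
  · simp [add_mul, mul_assoc, coeff_hPoly hn, coeff_hPoly h1, coeff_hPoly h2, speyerG_add_two hn]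

theorem hPoly_add_four (t : ℝ) (n : ℕ) :
    hPoly (n + 2 + 2) t = (1 + X) * hPoly (n + 1 + 2) t + C t * X * hPoly (n + 2) t :=
  hPoly_add_two (by omega) t

theorem hPoly_two (t : ℝ) : hPoly 2 t = C t * X := by
  simp [hPoly, speyerG]

theorem hPoly_three (t : ℝ) : hPoly 3 t = C t * X + C t * X ^ 2 := by
  simp [hPoly, speyerG, Finset.sum_Icc_succ_top]

section EvalRecurrence

variable {t : ℝ} {p : ℕ → ℝ[X]}

theorem eval_one_of_rec (hp : ∀ n, p (n + 2) = (1 + X) * p (n + 1) + C t * X * p n) (n : ℕ) :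
    (p (n + 2)).eval 1 = 2 * (p (n + 1)).eval 1 + t * (p n).eval 1 := by
  rw [hp]
  simp only [eval_add, eval_mul, eval_one, eval_X, eval_C]
  ring

theorem derivative_eval_one_of_rec (hp : ∀ n, p (n + 2) = (1 + X) * p (n + 1) + C t * X * p n)
    (n : ℕ) :
    (derivative (p (n + 2))).eval 1 = (p (n + 1)).eval 1 + 2 * (derivative (p (n + 1))).eval 1
      + t * (p n).eval 1 + t * (derivative (p n)).eval 1 := by
  rw [hp]
  simp only [derivative_add, derivative_mul, derivative_one, derivative_X, derivative_C, eval_add,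
    eval_mul, eval_one, eval_X, eval_C, eval_zero]
  ring

theorem derivative_derivative_eval_one_of_rec
    (hp : ∀ n, p (n + 2) = (1 + X) * p (n + 1) + C t * X * p n) (n : ℕ) :
    (derivative (derivative (p (n + 2)))).eval 1 =
      2 * (derivative (p (n + 1))).eval 1 + 2 * (derivative (derivative (p (n + 1)))).eval 1
      + 2 * t * (derivative (p n)).eval 1 + t * (derivative (derivative (p n))).eval 1 := by
  rw [hp]
  simp only [derivative_add, derivative_mul, derivative_one, derivative_X, derivative_C, eval_add,
    eval_mul, eval_one, eval_X, eval_C, derivative_zero, eval_zero]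
  ring

end EvalRecurrence

theorem eq_zero_of_linear_rec {u : ℕ → ℝ} {a b : ℝ} (h : ∀ n, u (n + 2) = a * u (n + 1) + b * u n)
    (h0 : u 0 = 0) (h1 : u 1 = 0) (n : ℕ) : u n = 0 := by
  induction n using Nat.twoStepInduction with
  | zero => exact h0
  | one => exact h1
  | more n ihn ihn1 => rw [h, ihn, ihn1]; ring

theorem linear_rec_eq_binet {u : ℕ → ℝ} {a b α β A B : ℝ}
    (h : ∀ n, u (n + 2) = a * u (n + 1) + b * u n) (hα : α ^ 2 = a * α + b) (hβ : β ^ 2 = a * β + b)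
    (h0 : u 0 = A + B) (h1 : u 1 = A * α + B * β) (n : ℕ) : u n = A * α ^ n + B * β ^ n := by
  refine sub_eq_zero.1 (eq_zero_of_linear_rec (u := fun n => u n - (A * α ^ n + B * β ^ n))
    (a := a) (b := b) (fun n => ?_) (by simp [h0]) (by simp [h1]) n)
  simp only [h, pow_add, pow_one]
  linear_combination (-(A * α ^ n)) * hα - B * β ^ n * hβ

theorem tendsto_succ_div_of_binet {u : ℕ → ℝ} {α β A B : ℝ}
    (hu : ∀ n, u n = A * α ^ n + B * β ^ n) (hA : A ≠ 0) (hβ : |β| < α) :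
    Tendsto (fun n => u (n + 1) / u n) atTop (𝓝 α) := by
  have hα : 0 < α := (abs_nonneg β).trans_lt hβ
  have hnorm : Tendsto (fun n => u n / α ^ n) atTop (𝓝 A) := by
    have hgeom := tendsto_pow_atTop_nhds_zero_of_abs_lt_one (r := β / α) (by
      rw [abs_div, abs_of_pos hα]; exact (div_lt_one hα).2 hβ)
    convert tendsto_const_nhds.add (hgeom.const_mul B) using 1
    · ext n; rw [hu, div_pow]; field_simp
    · simp
  have := ((hnorm.comp (tendsto_add_atTop_nat 1)).div hnorm hA).const_mul α
  rw [div_self hA, mul_one] at this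
  refine this.congr fun n => ?_
  show α * (u (n + 1) / α ^ (n + 1) / (u n / α ^ n)) = u (n + 1) / u n
  rw [pow_succ]
  field_simp

theorem hPoly_eval_one_pos {t : ℝ} (ht : 0 < t) {n : ℕ} (hn : 2 ≤ n) :
    0 < (hPoly n t).eval 1 := by
  obtain ⟨m, rfl⟩ := Nat.exists_eq_add_of_le' hn
  induction m using Nat.twoStepInduction with
  | zero => simp [hPoly_two, ht]
  | one => simp [hPoly_three, ht]
  | more m ihm ihm1 =>
    rw [eval_one_of_rec (p := fun m => hPoly (m + 2) t) (hPoly_add_four t) m]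
    have := ihm (by omega); have := ihm1 (by omega)
    positivity

theorem hPoly_derivative_eval_one (t : ℝ) {n : ℕ} (hn : 2 ≤ n) :
    (derivative (hPoly n t)).eval 1 = n / 2 * (hPoly n t).eval 1 := by
  obtain ⟨m, rfl⟩ := Nat.exists_eq_add_of_le' hn
  refine sub_eq_zero.1 (eq_zero_of_linear_rec (a := 2) (b := t)
    (u := fun m => (derivative (hPoly (m + 2) t)).eval 1 - (m + 2 : ℕ) / 2 * (hPoly (m + 2) t).eval 1)
    (fun m => ?_) ?_ ?_ m)
  · simp only [derivative_eval_one_of_rec (p := fun m => hPoly (m + 2) t) (hPoly_add_four t),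
      eval_one_of_rec (p := fun m => hPoly (m + 2) t) (hPoly_add_four t)]
    push_cast; ring
  · simp [hPoly_two]
  · simp only [Nat.reduceAdd, hPoly_three, derivative_add, derivative_mul, derivative_C, derivative_X,
      derivative_X_pow, eval_add, eval_mul, eval_C, eval_X, eval_pow, eval_zero, eval_one, one_pow,
      Nat.cast_ofNat]
    ring

-- The paper's identity for `h_n''(1)`, divided by `4 (t + 1)`.
theorem hPoly_derivative_derivative_eval_one (t : ℝ) {n : ℕ} (hn : 2 ≤ n) :
    4 * (t + 1) * (derivative (derivative (hPoly n t))).eval 1 =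
      (n - 1) * (hPoly (n + 1) t).eval 1 + n * (n * t + n - 2 * t - 3) * (hPoly n t).eval 1 := by
  obtain ⟨m, rfl⟩ := Nat.exists_eq_add_of_le' hn
  refine sub_eq_zero.1 (eq_zero_of_linear_rec (a := 2) (b := t)
    (u := fun m => 4 * (t + 1) * (derivative (derivative (hPoly (m + 2) t))).eval 1 -
      (((m + 2 : ℕ) - 1) * (hPoly (m + 2 + 1) t).eval 1
        + (m + 2 : ℕ) * ((m + 2 : ℕ) * t + (m + 2 : ℕ) - 2 * t - 3) * (hPoly (m + 2) t).eval 1))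
    (fun m => ?_) ?_ ?_ m)
  · simp only [derivative_derivative_eval_one_of_rec (p := fun m => hPoly (m + 2) t) (hPoly_add_four t),
      eval_one_of_rec (p := fun m => hPoly (m + 2) t) (hPoly_add_four t),
      hPoly_derivative_eval_one t (show 2 ≤ m + 2 by omega),
      hPoly_derivative_eval_one t (show 2 ≤ m + 1 + 2 by omega)]
    push_cast; ring
  · simp only [Nat.reduceAdd, hPoly_two, hPoly_three, derivative_add, derivative_mul, derivative_C,
      derivative_X, derivative_one, derivative_zero, eval_add, eval_mul, eval_C, eval_X, eval_pow,
      eval_zero, eval_one, one_pow, Nat.cast_ofNat]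
    ring
  · rw [eval_one_of_rec (p := fun m => hPoly (m + 2) t) (hPoly_add_four t) 0]
    simp only [Nat.reduceAdd, hPoly_two, hPoly_three, derivative_add, derivative_mul, derivative_C,
      derivative_X, derivative_X_pow, derivative_one, derivative_zero, eval_add, eval_mul, eval_C, eval_X,
      eval_pow, eval_zero, eval_one, one_pow, Nat.cast_ofNat]
    ring

theorem tendsto_hPoly_eval_one_ratio {t : ℝ} (ht : 0 < t) :
    Tendsto (fun n => (hPoly (n + 1) t).eval 1 / (hPoly n t).eval 1) atTop (𝓝 (1 + √(t + 1))) := by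
  set s := √(t + 1)
  have hs : s ^ 2 = t + 1 := Real.sq_sqrt (by linarith)
  have hs0 : 0 < s := Real.sqrt_pos.2 (by linarith)
  have hbinet := linear_rec_eq_binet (u := fun m => (hPoly (m + 2) t).eval 1)
    (A := t * (1 + s) / (2 * s)) (B := t * (s - 1) / (2 * s)) (α := 1 + s) (β := 1 - s)
    (eval_one_of_rec (p := fun m => hPoly (m + 2) t) (hPoly_add_four t))
    (by linear_combination hs) (by linear_combination hs)
    (by simp only [Nat.reduceAdd, hPoly_two, eval_mul, eval_C, eval_X]; field_simp; ring)
    (by simp only [Nat.reduceAdd, hPoly_three, eval_add, eval_mul, eval_C, eval_X, eval_pow]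
        field_simp; ring)
  exact (tendsto_add_atTop_iff_nat 2).1
    (tendsto_succ_div_of_binet hbinet (by positivity) (abs_lt.2 ⟨by linarith, by linarith⟩))

theorem hPoly_variance_eq {t : ℝ} (ht : 0 < t) {n : ℕ} (hn : 2 ≤ n) :
    (derivative (derivative (hPoly n t))).eval 1 / (hPoly n t).eval 1 + (n : ℝ) / 2 - (n : ℝ) ^ 2 / 4
      = ((n : ℝ) - 1) / (4 * (t + 1)) * ((hPoly (n + 1) t).eval 1 / (hPoly n t).eval 1)
        - (n : ℝ) / (4 * (t + 1)) := by
  have ha := (hPoly_eval_one_pos ht hn).ne'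
  have key := hPoly_derivative_derivative_eval_one t hn
  field_simp
  linear_combination 2 * key

theorem tendsto_hPoly_variance_div {t : ℝ} (ht : 0 < t) :
    Tendsto (fun n : ℕ => (((n : ℝ) - 1) / (4 * (t + 1)) * ((hPoly (n + 1) t).eval 1 / (hPoly n t).eval 1)
        - (n : ℝ) / (4 * (t + 1))) / n) atTop (𝓝 (1 / (4 * √(t + 1)))) := by
  have h := ((((tendsto_const_nhds (x := (1 : ℝ))).sub tendsto_inv_atTop_nhds_zero_nat).mul
    (tendsto_hPoly_eval_one_ratio ht)).sub (tendsto_const_nhds (x := (1 : ℝ)))).div_const (4 * (t + 1))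
  have hlim : ((1 - 0) * (1 + √(t + 1)) - 1) / (4 * (t + 1)) = 1 / (4 * √(t + 1)) := by
    have hs0 : 0 < √(t + 1) := Real.sqrt_pos.2 (by linarith)
    rw [div_eq_div_iff (by positivity) (by positivity)]
    linear_combination 4 * Real.sq_sqrt (by linarith : 0 ≤ t + 1)
  rw [hlim] at h
  refine h.congr' (eventually_atTop.2 ⟨1, fun n hn => ?_⟩)
  have : (n : ℝ) ≠ 0 := by positivity
  field_simp

theorem hPoly_variance (t : ℝ) (ht : 0 < t) (σ2 : ℕ → ℝ)
    (hσ : ∀ n : ℕ, σ2 n =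
      (Polynomial.derivative (Polynomial.derivative (hPoly n t))).eval 1 / (hPoly n t).eval 1
        + (n : ℝ) / 2 - (n : ℝ) ^ 2 / 4) :
    (∀ n : ℕ, 2 ≤ n →
      σ2 n = ((n : ℝ) - 1) / (4 * (t + 1)) * ((hPoly (n + 1) t).eval 1 / (hPoly n t).eval 1)
        - (n : ℝ) / (4 * (t + 1))) ∧
    Filter.Tendsto (fun n : ℕ => σ2 n / (n : ℝ)) Filter.atTop
      (nhds (1 / (4 * Real.sqrt (t + 1)))) ∧
    Filter.Tendsto σ2 Filter.atTop Filter.atTop := by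
  have hformula := fun n (hn : 2 ≤ n) => (hσ n).trans (hPoly_variance_eq ht hn)
  have hdiv : Tendsto (fun n : ℕ => σ2 n / n) atTop (𝓝 (1 / (4 * √(t + 1)))) :=
    (tendsto_hPoly_variance_div ht).congr'
      (eventually_atTop.2 ⟨2, fun n hn => by simp only [hformula n hn]⟩)
  refine ⟨hformula, hdiv, ?_⟩
  refine (hdiv.pos_mul_atTop (by positivity) tendsto_natCast_atTop_atTop).congr'
    (eventually_atTop.2 ⟨1, fun n hn => ?_⟩)
  have : (n : ℝ) ≠ 0 := by positivity
  exact div_mul_cancel₀ _ this
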